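/- In one pair of variables (x,p), if a polynomial a(p) (depending only on p) satisfies x ∗_λ a ∈ {D ∗_λ x : D polynomial} for the Moyal product with λ an invertible parameter, then a is a constant. -/

import Mathlib

open MvPolynomial

noncomputable section

/-- Polynomial functions on ℝ² with coordinates x = X 0, p = X 1. -/
abbrev P1 : Type := MvPolynomial (Fin 2) ℝ
/-- Doubled ring with coordinates x, p, x̃, p̃ = X 0, X 1, X 2, X 3. -/
abbrev Q1 : Type := MvPolynomial (Fin 4) ℝ

def emb1a : P1 →ₐ[ℝ] Q1 := rename (fun i : Fin 2 => (⟨i.val, by omega⟩ : Fin 4))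
def emb1b : P1 →ₐ[ℝ] Q1 := rename (fun i : Fin 2 => (⟨i.val + 2, by omega⟩ : Fin 4))
def diag1 : Q1 →ₐ[ℝ] P1 := aeval (fun j : Fin 4 => X (⟨j.val % 2, by omega⟩ : Fin 2))

/-- partial derivative in the j-th variable, as a linear endomorphism -/
def pd (j : Fin 4) : Module.End ℝ Q1 := (pderiv j).toLinearMap

/-- The bidifferential operator ∂_x ∂_{p̃} on the doubled ring. -/
def Dst : Module.End ℝ Q1 := pd 0 * pd 3

/-- The star product with the convention x ∗_λ a(p) = x·a(p) + 2λ a′(p):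
f ∗_λ g = exp(2λ ∂_x∂_{p̃}) f(x,p) g(x̃,p̃)|_{x̃=x,p̃=p}.  Since f and g are
polynomials, the exponential series truncates. -/
def star2 (lam : ℝ) (f g : P1) : P1 :=
  diag1 (∑ n ∈ Finset.range (f.totalDegree + g.totalDegree + 1),
    ((2 * lam) ^ n / n.factorial : ℝ) • ((Dst ^ n) (emb1a f * emb1b g)))

lemma coeff_pderiv' {σ : Type*} [DecidableEq σ] (i : σ) (f : MvPolynomial σ ℝ) (m : σ →₀ ℕ) :
    coeff m (pderiv i f) = (m i + 1) * coeff (m + Finsupp.single i 1) f := by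
  induction f using MvPolynomial.induction_on' with
  | add p q hp hq => simp [hp, hq, mul_add]
  | monomial s a =>
    rw [pderiv_monomial, coeff_monomial, coeff_monomial]
    split_ifs with h1 h2 h2
    · subst h2
      simp only [Finsupp.add_apply, Finsupp.single_eq_same]
      push_cast
      ring
    · -- s - single i 1 = m, s ≠ m + single i 1 : show a * s i = 0
      rcases Nat.eq_zero_or_pos (s i) with hs | hs
      · simp [hs]
      · exfalso; apply h2
        ext j
        rcases eq_or_ne j i with rfl | hj
        · have := congrArg (fun (t : σ →₀ ℕ) => t j) h1
          simp only [Finsupp.tsub_apply, Finsupp.single_eq_same, Finsupp.add_apply] at *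
          omega
        · have := congrArg (fun (t : σ →₀ ℕ) => t j) h1
          simp only [Finsupp.tsub_apply, Finsupp.single_eq_of_ne' (Ne.symm hj), Finsupp.add_apply] at *
          omega
    · exfalso; apply h1; subst h2; exact add_tsub_cancel_right m (Finsupp.single i 1)
    · ring

lemma coeff_eq_zero_of_pderiv {σ : Type*} [DecidableEq σ] {i : σ} {f : MvPolynomial σ ℝ}
    (h : pderiv i f = 0) {m : σ →₀ ℕ} (hm : m i ≠ 0) : coeff m f = 0 := by
  have hme : m = (m - Finsupp.single i 1) + Finsupp.single i 1 := by
    ext j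
    rcases eq_or_ne j i with rfl | hj
    · simp only [Finsupp.add_apply, Finsupp.tsub_apply, Finsupp.single_eq_same]; omega
    · simp [Finsupp.single_eq_of_ne' (Ne.symm hj)]
  have := coeff_pderiv' i f (m - Finsupp.single i 1)
  rw [h, coeff_zero] at this
  rw [hme]
  have h2 : ((((m - Finsupp.single i 1) : σ →₀ ℕ) i) : ℝ) + 1 ≠ 0 := by
    have : (0:ℝ) ≤ ((((m - Finsupp.single i 1) : σ →₀ ℕ) i) : ℝ) := Nat.cast_nonneg _
    linarith
  exact (mul_eq_zero.mp this.symm).resolve_left h2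

lemma pd0_emb1b (q : P1) : pderiv (0 : Fin 4) (emb1b q) = 0 := by
  apply pderiv_eq_zero_of_notMem_vars
  intro hv
  obtain ⟨j, _, hj⟩ := mem_vars_rename _ _ hv
  exact absurd (congrArg Fin.val hj) (by simp)

lemma pd3_emb1a (q : P1) : pderiv (3 : Fin 4) (emb1a q) = 0 := by
  apply pderiv_eq_zero_of_notMem_vars
  intro hv
  obtain ⟨j, _, hj⟩ := mem_vars_rename _ _ hv
  have := congrArg Fin.val hj
  simp at this
  omega

lemma pd3_emb1b (q : P1) : pderiv (3 : Fin 4) (emb1b q) = emb1b (pderiv 1 q) := by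
  have hinj : Function.Injective (fun i : Fin 2 => (⟨i.val + 2, by omega⟩ : Fin 4)) := by
    intro x y hxy
    have := congrArg Fin.val hxy
    simp at this
    exact Fin.ext this
  have := pderiv_rename hinj 1 q
  simpa [emb1b] using this

lemma diag1_emb1a (q : P1) : diag1 (emb1a q) = q := by
  rw [emb1a, diag1, aeval_rename]
  have : ((fun j : Fin 4 => (X (⟨j.val % 2, by omega⟩ : Fin 2) : P1)) ∘
      (fun i : Fin 2 => (⟨i.val, by omega⟩ : Fin 4))) = X := by
    funext i
    simp only [Function.comp]
    congr 1
    exact Fin.ext (by simp [Nat.mod_eq_of_lt i.isLt])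
  rw [this, aeval_X_left_apply]

lemma diag1_emb1b (q : P1) : diag1 (emb1b q) = q := by
  rw [emb1b, diag1, aeval_rename]
  have : ((fun j : Fin 4 => (X (⟨j.val % 2, by omega⟩ : Fin 2) : P1)) ∘
      (fun i : Fin 2 => (⟨i.val + 2, by omega⟩ : Fin 4))) = X := by
    funext i
    simp only [Function.comp]
    congr 1
    refine Fin.ext ?_
    have : i.val < 2 := i.isLt
    simp [Nat.add_mod, Nat.mod_eq_of_lt this]
  rw [this, aeval_X_left_apply]

lemma star2_X_left (lam : ℝ) (a : P1) :
    star2 lam (X 0) a = X 0 * a + (2 * lam) • pderiv 1 a := by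
  have hXa : emb1a (X (0 : Fin 2)) = X (0 : Fin 4) := by
    rw [emb1a, rename_X]
    rfl
  have hDst1 : Dst (emb1a (X 0) * emb1b a) = emb1b (pderiv 1 a) := by
    rw [hXa]
    show pd 0 (pd 3 (X 0 * emb1b a)) = _
    show pderiv 0 (pderiv 3 (X (0:Fin 4) * emb1b a)) = _
    rw [pderiv_mul, pderiv_X_of_ne (by decide), pd3_emb1b, zero_mul, zero_add,
      pderiv_mul, pderiv_X_self, one_mul, pd0_emb1b, mul_zero, add_zero]
  have hDst2 : Dst (emb1b (pderiv 1 a)) = 0 := by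
    show pderiv 0 (pderiv 3 (emb1b (pderiv 1 a))) = 0
    rw [pd3_emb1b, pd0_emb1b]
  have hvanish : ∀ n, Dst ^ (n + 2) = 0 ∘ₗ (0 : Module.End ℝ Q1) ∨ True := fun _ => Or.inr trivial
  have hterm : ∀ n, (Dst ^ (n + 2)) (emb1a (X 0) * emb1b a) = 0 := by
    intro n
    rw [pow_succ, Module.End.mul_apply, hDst1, pow_succ, Module.End.mul_apply, hDst2, map_zero]
  rw [star2]
  rw [show (X (0:Fin 2)).totalDegree + a.totalDegree + 1 = a.totalDegree + 2 by
    rw [totalDegree_X]; ring]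
  rw [← Finset.sum_subset (Finset.range_subset_range.mpr (by omega : 2 ≤ a.totalDegree + 2))
    (fun n _ hn => by
      simp only [Finset.mem_range, not_lt] at hn
      obtain ⟨k, rfl⟩ := Nat.exists_eq_add_of_le hn
      rw [show 2 + k = k + 2 by ring, hterm, smul_zero])]
  rw [Finset.sum_range_succ, Finset.sum_range_one]
  simp only [pow_zero, pow_one, Module.End.one_apply, hDst1, Nat.factorial, Nat.cast_one,
    Nat.cast_ofNat, mul_one, Nat.succ_eq_add_one, Nat.zero_add]
  rw [map_add, map_smul, map_smul, map_mul, diag1_emb1a, diag1_emb1b, diag1_emb1b]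
  norm_num

lemma star2_X_right (lam : ℝ) (D : P1) :
    star2 lam D (X 0) = D * X 0 := by
  have hXb : emb1b (X (0 : Fin 2)) = X (2 : Fin 4) := by
    rw [emb1b, rename_X]
    rfl
  have hDst1 : Dst (emb1a D * emb1b (X 0)) = 0 := by
    rw [hXb]
    show pderiv 0 (pderiv 3 (emb1a D * X (2:Fin 4))) = 0
    rw [pderiv_mul, pd3_emb1a, pderiv_X_of_ne (by decide), zero_mul, mul_zero, add_zero, map_zero]
  have hterm : ∀ n, (Dst ^ (n + 1)) (emb1a D * emb1b (X 0)) = 0 := by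
    intro n
    rw [pow_succ, Module.End.mul_apply, hDst1, map_zero]
  rw [star2]
  rw [Finset.sum_eq_single_of_mem 0 (Finset.mem_range.mpr (by omega))
    (fun n _ hn => by
      obtain ⟨k, rfl⟩ := Nat.exists_eq_add_of_lt (Nat.pos_of_ne_zero hn)
      rw [Nat.zero_add, hterm, smul_zero])]
  simp only [pow_zero, Module.End.one_apply, Nat.factorial, Nat.cast_one]
  rw [map_smul, map_mul, diag1_emb1a, diag1_emb1b]
  norm_num

/-- If a(p) depends only on p, λ ≠ 0, and x ∗_λ a lies in the left ideal
{D ∗_λ x : D polynomial}, then a is a constant. -/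
theorem stmt_11 (lam : ℝ) (hlam : lam ≠ 0) (a : P1) (ha : pderiv (0 : Fin 2) a = 0)
    (h : ∃ D : P1, star2 lam (X 0) a = star2 lam D (X 0)) :
    ∃ k : ℝ, a = C k := by
  obtain ⟨D, hD⟩ := h
  rw [star2_X_left, star2_X_right] at hD
  -- first show pderiv 1 a = 0
  have hp1 : pderiv (1 : Fin 2) a = 0 := by
    apply MvPolynomial.ext
    intro m
    rw [coeff_zero]
    rcases eq_or_ne (m 0) 0 with hm0 | hm0
    · -- take coeff m of hD
      have hc := congrArg (coeff m) hD
      rw [coeff_add, coeff_smul, mul_comm (X (0:Fin 2)) a, coeff_mul_X', coeff_mul_X'] at hc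
      rw [if_neg (by simp [Finsupp.mem_support_iff, hm0]),
        if_neg (by simp [Finsupp.mem_support_iff, hm0]), zero_add] at hc
      have h2 : (2 : ℝ) * lam ≠ 0 := by
        intro hx
        exact hlam (by linarith [mul_eq_zero.mp hx |>.resolve_left (by norm_num)])
      exact (mul_eq_zero.mp hc).resolve_left h2
    · -- coeff (m + single 1 1) a = 0 since m 0 ≠ 0, then use coeff_pderiv'
      rw [coeff_pderiv']
      have : coeff (m + Finsupp.single 1 1) a = 0 := by
        apply coeff_eq_zero_of_pderiv ha
        simp [Finsupp.add_apply, Finsupp.single_eq_of_ne (by decide : (1:Fin 2) ≠ 0), hm0]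
      rw [this, mul_zero]
  refine ⟨coeff 0 a, ?_⟩
  apply MvPolynomial.ext
  intro m
  rw [coeff_C]
  rcases eq_or_ne m 0 with rfl | hm
  · rw [if_pos rfl]
  · rw [if_neg (Ne.symm hm)]
    obtain ⟨i, hi⟩ : ∃ i, m i ≠ 0 := by
      by_contra hc
      push_neg at hc
      exact hm (Finsupp.ext fun i => hc i)
    fin_cases i
    · exact coeff_eq_zero_of_pderiv ha hi
    · exact coeff_eq_zero_of_pderiv hp1 hi
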